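/- arXiv:1702.00326 — 9 statements merged into one kernel-verified Lean document; each statement's English description precedes it below -/
import Mathlib

section
/- If X is a topological space, κ is an infinite cardinal, and B is a collection of subsets of X each of which (as a subspace) is κ-weakly-resolvable, then the closure of ⋃B is κ-weakly-resolvable as a subspace of X. -/
set_option autoImplicit false

open Cardinal Set

/-- A topological space `X` is `κ`-weakly-resolvable if there is `f : X → κ` such that
`{x ∈ X : f x ≥ α}` is dense in `X` for every `α < κ`. -/
def WeaklyResolvable (X : Type*) [TopologicalSpace X] (κ : Cardinal) : Prop :=
  ∃ f : X → κ.ord.ToType, ∀ α : κ.ord.ToType, Dense {x : X | α ≤ f x}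

/-- if every member of `B` is `κ`-weakly-resolvable as a subspace,
then so is the closure of `⋃ B`. -/
theorem weaklyResolvable_closure_sUnion {X : Type*} [TopologicalSpace X]
    (κ : Cardinal) (hκ : ℵ₀ ≤ κ) (B : Set (Set X))
    (hB : ∀ b ∈ B, WeaklyResolvable b κ) :
    WeaklyResolvable (closure (⋃₀ B)) κ := by
  classical
  have hκ0 : κ.ord ≠ 0 := by
    intro h
    have h2 : κ = 0 := by
      have := Cardinal.card_ord κ
      rw [h] at this
      simpa using this.symm
    rw [h2] at hκ
    exact Cardinal.aleph0_ne_zero (le_antisymm hκ zero_le)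
  obtain ⟨z⟩ : Nonempty κ.ord.ToType := Ordinal.toType_nonempty_iff_ne_zero.2 hκ0
  choose g hg using hB
  have hwf : WellFounded (WellOrderingRel (α := Set X)) :=
    (inferInstance : IsWellOrder (Set X) WellOrderingRel).wf
  -- the selector of the minimal member of B containing x
  have key : ∀ (S : Set (Set X)) (hS : S.Nonempty), (hwf.min S hS) ∈ S :=
    fun S hS => hwf.min_mem S hS
  let F : X → κ.ord.ToType := fun x =>
    if hx : x ∈ ⋃₀ B then
      g (hwf.min {b | b ∈ B ∧ x ∈ b} hx)
        (key _ hx).1 ⟨x, (key _ hx).2⟩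
    else z
  refine ⟨fun x => F x.1, fun α => ?_⟩
  rw [dense_iff_inter_open]
  rintro U hU hUne
  obtain ⟨V, hV, rfl⟩ := isOpen_induced_iff.mp hU
  obtain ⟨x0, hx0V⟩ := hUne
  obtain ⟨w, hwV, hwU⟩ := mem_closure_iff.mp x0.2 V hV hx0V
  have hT : {b | b ∈ B ∧ (V ∩ b).Nonempty}.Nonempty := by
    obtain ⟨b, hb, hwb⟩ := hwU
    exact ⟨b, hb, w, hwV, hwb⟩
  set b₀ := hwf.min _ hT with hb₀def
  have hb₀ := hwf.min_mem _ hT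
  -- use density inside b₀
  obtain ⟨y, hyV, hyα⟩ := dense_iff_inter_open.mp (hg b₀ hb₀.1 α)
    (Subtype.val ⁻¹' V) (hV.preimage continuous_subtype_val)
    (by obtain ⟨p, hpV, hpb⟩ := hb₀.2; exact ⟨⟨p, hpb⟩, hpV⟩)
  have hyU : (y : X) ∈ ⋃₀ B := ⟨b₀, hb₀.1, y.2⟩
  have hycl : (y : X) ∈ closure (⋃₀ B) := subset_closure hyU
  refine ⟨⟨(y : X), hycl⟩, hyV, ?_⟩
  -- show α ≤ F y
  show α ≤ F (y : X)
  have hmin : hwf.min {b | b ∈ B ∧ (y : X) ∈ b} hyU = b₀ := by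
    have h1 := hwf.min_mem {b | b ∈ B ∧ (y : X) ∈ b} hyU
    set b₁ := hwf.min {b | b ∈ B ∧ (y : X) ∈ b} hyU with hb₁def
    have hb₁T : b₁ ∈ {b | b ∈ B ∧ (V ∩ b).Nonempty} := ⟨h1.1, (y : X), hyV, h1.2⟩
    have n1 : ¬ WellOrderingRel b₁ b₀ := hwf.not_lt_min _ hb₁T
    have n2 : ¬ WellOrderingRel b₀ b₁ :=
      hwf.not_lt_min {b | b ∈ B ∧ (y : X) ∈ b} (x := b₀) ⟨hb₀.1, y.2⟩
    rcases trichotomous_of (WellOrderingRel (α := Set X)) b₁ b₀ with h | h | h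
    · exact absurd h n1
    · exact h
    · exact absurd h n2
  have hF : F (y : X) = g (hwf.min {b | b ∈ B ∧ (y : X) ∈ b} hyU)
      (key _ hyU).1 ⟨(y : X), (key _ hyU).2⟩ := dif_pos hyU
  have gen : ∀ (b b' : Set X), b = b' → ∀ (hb : b ∈ B) (hb' : b' ∈ B)
      (hx : (y : X) ∈ b) (hx' : (y : X) ∈ b'),
      g b hb ⟨(y : X), hx⟩ = g b' hb' ⟨(y : X), hx'⟩ := by
    rintro b b' rfl hb hb' hx hx'
    rfl
  rw [hF, gen _ _ hmin (key _ hyU).1 hb₀.1 (key _ hyU).2 y.2]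
  exact hyα
end

section
/- Every topological space X contains a greatest κ-weakly-resolvable open-closed-generated subspace: namely, the closure of the union of all κ-weakly-resolvable subsets of X is itself κ-weakly-resolvable and contains every κ-weakly-resolvable subset of X. -/
set_option autoImplicit false

open Cardinal Set

/-!
The union of a family of `κ`-weakly-resolvable subspaces is `κ`-weakly-resolvable: well-order
the family and colour each point by the witness of the first member containing it. An open set
meeting the union meets a first member `Yᵢ`, and the points of `Yᵢ` inside it are coloured by
the witness of `Yᵢ`, which takes large values densely there. Weak resolvability then passes from
a dense subspace to the whole space by extending the colouring arbitrarily.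
-/

namespace WeaklyResolvable

variable {X : Type*} [TopologicalSpace X] {κ : Cardinal}

theorem of_denseRange {Y : Type*} [TopologicalSpace Y] {e : Y → X} (he : Continuous e)
    (hinj : e.Injective) (hd : DenseRange e) (h : WeaklyResolvable Y κ) :
    WeaklyResolvable X κ := by
  obtain ⟨g, hg⟩ := h
  refine ⟨Function.extend e g (fun x => g (hd.some x)), fun α => ?_⟩
  refine (hd.dense_image he (hg α)).mono ?_
  rintro _ ⟨y, hy, rfl⟩
  simpa only [mem_ofPred_eq, hinj.extend_apply] using hy

protected theorem closure {s : Set X} (h : WeaklyResolvable s κ) :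
    WeaklyResolvable (closure s) κ :=
  h.of_denseRange (continuous_inclusion subset_closure) (inclusion_injective subset_closure)
    ((denseRange_inclusion_iff subset_closure).2 subset_rfl)

theorem iUnion_of_wellFoundedLT {ι : Type*} [LinearOrder ι] [WellFoundedLT ι]
    {Y : ι → Set X} (h : ∀ i, WeaklyResolvable (Y i) κ) : WeaklyResolvable (⋃ i, Y i) κ := by
  choose g hg using h
  have hidx (x : ↥(⋃ i, Y i)) : {i | (x : X) ∈ Y i}.Nonempty := mem_iUnion.1 x.2
  let idx (x : ↥(⋃ i, Y i)) : ι := wellFounded_lt.min _ (hidx x)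
  have idx_mem (x : ↥(⋃ i, Y i)) : (x : X) ∈ Y (idx x) := wellFounded_lt.min_mem _ (hidx x)
  let f (x : ↥(⋃ i, Y i)) : κ.ord.ToType := g (idx x) ⟨x, idx_mem x⟩
  have f_eq (x : ↥(⋃ i, Y i)) (i : ι) (hi : (x : X) ∈ Y i) (hx : idx x = i) :
      f x = g i ⟨x, hi⟩ := by
    subst hx; rfl
  refine ⟨f, fun α => Subtype.dense_iff.2 fun x hx => mem_closure_iff.2 fun V hV hxV => ?_⟩
  have hmeet : {i | (V ∩ Y i).Nonempty}.Nonempty := by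
    obtain ⟨i, hi⟩ := mem_iUnion.1 hx
    exact ⟨i, x, hxV, hi⟩
  set i₀ := wellFounded_lt.min _ hmeet
  obtain ⟨y, hyV, hy⟩ : (V ∩ Y i₀).Nonempty := wellFounded_lt.min_mem _ hmeet
  obtain ⟨_, hzV, ⟨z, hzα, rfl⟩⟩ :=
    mem_closure_iff.1 (Subtype.dense_iff.1 (hg i₀ α) hy) V hV hyV
  let z' : ↥(⋃ i, Y i) := ⟨z, mem_iUnion.2 ⟨i₀, z.2⟩⟩
  have hz_idx : idx z' = i₀ := le_antisymm
    (not_lt.1 (wellFounded_lt.not_lt_min {i | (z : X) ∈ Y i} z.2))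
    (not_lt.1 (wellFounded_lt.not_lt_min {i | (V ∩ Y i).Nonempty} ⟨z, hzV, idx_mem z'⟩))
  refine ⟨z, hzV, z', ?_, rfl⟩
  simpa only [mem_ofPred_eq, f_eq z' i₀ z.2 hz_idx] using hzα

theorem iUnion {ι : Type*} {Y : ι → Set X} (h : ∀ i, WeaklyResolvable (Y i) κ) :
    WeaklyResolvable (⋃ i, Y i) κ :=
  letI : LinearOrder ι := IsWellOrder.linearOrder WellOrderingRel
  haveI : WellFoundedLT ι := ⟨WellOrderingRel.isWellOrder.wf⟩
  iUnion_of_wellFoundedLT h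

theorem sUnion {S : Set (Set X)} (h : ∀ s ∈ S, WeaklyResolvable s κ) :
    WeaklyResolvable (⋃₀ S) κ := by
  rw [sUnion_eq_iUnion]
  exact iUnion fun s => h s s.2

end WeaklyResolvable

theorem greatest_weaklyResolvable_subspace_general (X : Type*) [TopologicalSpace X]
    (κ : Cardinal) :
    WeaklyResolvable (closure (⋃₀ {Y : Set X | WeaklyResolvable Y κ})) κ ∧
      ∀ Y : Set X, WeaklyResolvable Y κ →
        Y ⊆ closure (⋃₀ {Y : Set X | WeaklyResolvable Y κ}) :=
  ⟨WeaklyResolvable.closure (WeaklyResolvable.sUnion fun _ hY => hY),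
    fun Y hY => (subset_sUnion_of_mem (show Y ∈ {Y : Set X | WeaklyResolvable Y κ} from hY)).trans
      subset_closure⟩

/-- the closure of the union of all `κ`-weakly-resolvable subsets of `X`
is itself `κ`-weakly-resolvable, and it contains every `κ`-weakly-resolvable subset. -/
theorem greatest_weaklyResolvable_subspace (X : Type*) [TopologicalSpace X]
    (κ : Cardinal) (hκ : ℵ₀ ≤ κ) :
    WeaklyResolvable (closure (⋃₀ {Y : Set X | WeaklyResolvable Y κ})) κ ∧
      ∀ Y : Set X, WeaklyResolvable Y κ →
        Y ⊆ closure (⋃₀ {Y : Set X | WeaklyResolvable Y κ}) :=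
  greatest_weaklyResolvable_subspace_general X κ
end

section
/- For every infinite cardinal κ there exists an Ulam matrix: a family ⟨M_{α,ζ} : α < κ⁺, ζ < κ⟩ of subsets of κ⁺ such that (i) M_{α,ξ} ∩ M_{β,ξ} = ∅ whenever α ≠ β are below κ⁺ and ξ < κ; (ii) M_{α,ξ} ∩ M_{α,ζ} = ∅ whenever α < κ⁺ and ξ ≠ ζ are below κ; (iii) for each α < κ⁺, the set κ⁺ \ ⋃_{ζ<κ} M_{α,ζ} has cardinality at most κ. -/
open Cardinal Set

/-!
Ulam's construction: every `β < κ⁺` has at most `κ` predecessors, so fix injections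
`f β : Iio β ↪ κ` and put `β` into the entry `M α ζ` exactly when `α < β` and `f β α = ζ`.
Two entries of a column meeting at `β` would contradict injectivity of `f β`, two entries of a
row meeting at `β` would give `f β α` two values, and the row of `α` covers all of `Ioi α`,
leaving only `Iic α`, which has cardinality at most `κ`.
-/

section UlamMatrix

variable {T K : Type*} [LinearOrder T] (f : ∀ β : T, Iio β ↪ K)

def ulamMatrix (α : T) (ζ : K) : Set T :=
  {β | ∃ h : α < β, f β ⟨α, h⟩ = ζ}

theorem disjoint_ulamMatrix_of_ne_left {α γ : T} (hαγ : α ≠ γ) (ξ : K) :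
    Disjoint (ulamMatrix f α ξ) (ulamMatrix f γ ξ) := by
  refine Set.disjoint_left.mpr ?_
  rintro β ⟨hα, hαξ⟩ ⟨hγ, hγξ⟩
  exact hαγ (congrArg Subtype.val ((f β).injective (hαξ.trans hγξ.symm)))

theorem disjoint_ulamMatrix_of_ne_right (α : T) {ξ ζ : K} (hξζ : ξ ≠ ζ) :
    Disjoint (ulamMatrix f α ξ) (ulamMatrix f α ζ) := by
  refine Set.disjoint_left.mpr ?_
  rintro β ⟨hα, hαξ⟩ ⟨_, hαζ⟩
  exact hξζ (hαξ.symm.trans hαζ)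

theorem iUnion_ulamMatrix (α : T) : ⋃ ζ, ulamMatrix f α ζ = Ioi α := by
  ext β
  simp only [ulamMatrix, mem_iUnion, mem_ofPred_eq, mem_Ioi]
  exact ⟨fun ⟨_, h, _⟩ => h, fun h => ⟨_, h, rfl⟩⟩

theorem compl_iUnion_ulamMatrix (α : T) : (⋃ ζ, ulamMatrix f α ζ)ᶜ = Iic α := by
  rw [iUnion_ulamMatrix, compl_Ioi]

end UlamMatrix

theorem mk_Iic_le_of_ord_succ_toType {κ : Cardinal} (hκ : ℵ₀ ≤ κ)
    (α : (Order.succ κ).ord.ToType) : #(Iic α) ≤ κ := by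
  have hT : #(Order.succ κ).ord.ToType = Order.succ κ := mk_ord_toType _
  have hα := mk_Iic_lt α (by rw [hT, Ordinal.type_toType])
    (by rw [hT]; exact hκ.trans (Order.le_succ κ))
  rw [hT] at hα
  exact Order.lt_succ_iff.mp hα

/-- for every infinite cardinal `κ` there is an Ulam matrix
`⟨M_{α,ζ} : α < κ⁺, ζ < κ⟩` of subsets of `κ⁺` satisfying (i) columns are pairwise
disjoint, (ii) rows are pairwise disjoint, and (iii) each row covers all of `κ⁺`
except for a set of cardinality at most `κ`. -/
theorem exists_ulam_matrix (κ : Cardinal) (hκ : ℵ₀ ≤ κ) :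
    ∃ M : (Order.succ κ).ord.ToType → κ.ord.ToType → Set ((Order.succ κ).ord.ToType),
      (∀ α β : (Order.succ κ).ord.ToType, α ≠ β → ∀ ξ : κ.ord.ToType,
          M α ξ ∩ M β ξ = ∅) ∧
      (∀ α : (Order.succ κ).ord.ToType, ∀ ξ ζ : κ.ord.ToType, ξ ≠ ζ →
          M α ξ ∩ M α ζ = ∅) ∧
      (∀ α : (Order.succ κ).ord.ToType,
          #(↥(Set.univ \ ⋃ ζ : κ.ord.ToType, M α ζ)) ≤ κ) := by
  have hf : ∀ β : (Order.succ κ).ord.ToType, Nonempty (Iio β ↪ κ.ord.ToType) := fun β =>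
    le_def _ _ |>.mp <| (mk_ord_toType κ).symm ▸
      (mk_le_mk_of_subset Iio_subset_Iic_self).trans (mk_Iic_le_of_ord_succ_toType hκ β)
  set f := fun β => (hf β).some
  refine ⟨ulamMatrix f, fun α β hαβ ξ => ?_, fun α ξ ζ hξζ => ?_, fun α => ?_⟩
  · exact disjoint_iff_inter_eq_empty.mp (disjoint_ulamMatrix_of_ne_left f hαβ ξ)
  · exact disjoint_iff_inter_eq_empty.mp (disjoint_ulamMatrix_of_ne_right f α hξζ)
  · rw [← compl_eq_univ_sdiff, compl_iUnion_ulamMatrix]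
    exact mk_Iic_le_of_ord_succ_toType hκ α
end

section
/- Let X be a topological space such that for every point-countable family D of subsets of X, the family of closures {cl(D) : D ∈ D} is also point-countable. Then no subspace of X is ω₁-weakly-resolvable. -/
set_option autoImplicit false

open Cardinal Set

universe v

instance aux_iwo (o : Ordinal.{v}) : IsWellOrder o.ToType (· < ·) := isWellOrder_lt

lemma aux_countable_Iic (γ : (aleph 1 : Cardinal.{v}).ord.ToType) :
    {α : (aleph 1 : Cardinal.{v}).ord.ToType | α ≤ γ}.Countable := by
  rw [Cardinal.countable_iff_lt_aleph_one]
  set o : Ordinal.{v} := Ordinal.typein (α := (aleph 1 : Cardinal.{v}).ord.ToType) (· < ·) γ with ho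
  have hemb : Nonempty ({α : (aleph 1 : Cardinal.{v}).ord.ToType | α ≤ γ} ↪ (Set.Iic o)) := by
    refine ⟨⟨fun a => ⟨Ordinal.typein (α := (aleph 1 : Cardinal.{v}).ord.ToType) (· < ·) a.1, ?_⟩, ?_⟩⟩
    · exact (Ordinal.typein_le_typein' _).mpr a.2
    · intro a b hab
      exact Subtype.ext (Ordinal.typein_injective _ (congrArg Subtype.val hab))
  have h1 : Cardinal.lift.{v+1} #({α : (aleph 1 : Cardinal.{v}).ord.ToType | α ≤ γ})
      ≤ Cardinal.lift.{v} #(Set.Iic o) := Cardinal.lift_mk_le'.mpr hemb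
  have h2 : #(Set.Iic o) = Cardinal.lift.{v+1} (Order.succ o).card := by
    rw [← Order.Iio_succ, Ordinal.mk_Iio_ordinal]
  have h3 : (Order.succ o).card < aleph 1 := by
    rw [← Cardinal.lt_ord]
    exact (Cardinal.isSuccLimit_ord (aleph0_le_aleph 1)).succ_lt (Ordinal.typein_lt_self γ)
  have h4 : Cardinal.lift.{v+1} #({α : (aleph 1 : Cardinal.{v}).ord.ToType | α ≤ γ})
      ≤ Cardinal.lift.{v+1} (Order.succ o).card := by
    simpa [Cardinal.lift_lift, h2] using h1
  by_contra hcon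
  push_neg at hcon
  have h5 : (aleph 1 : Cardinal.{v+1}) ≤ Cardinal.lift.{v+1} (Order.succ o).card :=
    le_trans (Cardinal.aleph_one_le_lift.mpr hcon) h4
  exact absurd (Cardinal.aleph_one_le_lift.mp h5) (not_le.mpr h3)

lemma aux_exists_gt {A : Set ((aleph 1 : Cardinal.{v}).ord.ToType)} (hA : A.Countable) :
    ∃ β, ∀ α ∈ A, α < β := by
  haveI := hA.to_subtype
  have hcof : #A < ((aleph 1 : Cardinal.{v}).ord).cof := by
    rw [Cardinal.isRegular_aleph_one.cof_eq]
    exact lt_of_le_of_lt Cardinal.mk_le_aleph0 aleph0_lt_aleph_one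
  have hL : Ordinal.lsub (fun a : A => Ordinal.typein (α := (aleph 1 : Cardinal.{v}).ord.ToType) (· < ·) a.1)
      < (aleph 1 : Cardinal.{v}).ord :=
    Ordinal.lsub_lt_ord hcof (fun a => Ordinal.typein_lt_self a.1)
  refine ⟨Ordinal.enum (α := (aleph 1 : Cardinal.{v}).ord.ToType) (· < ·)
    ⟨_, by rw [Ordinal.type_toType]; exact Set.mem_Iio.mpr hL⟩, fun α hα => ?_⟩
  rw [← (Ordinal.typein_lt_typein (α := (aleph 1 : Cardinal.{v}).ord.ToType) (· < ·))]
  erw [Ordinal.typein_enum]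
  exact Ordinal.lt_lsub _ (⟨α, hα⟩ : A)

/-- if for every point-countable family `𝒟` of subsets of `X` the family of
closures is also point-countable (counted with multiplicity: every point lies in the
closure of at most countably many members of `𝒟`), then no (nonempty) subspace of `X` is
`ω₁`-weakly-resolvable. -/
theorem no_weaklyResolvable_subspace_of_closure_point_countable
    {X : Type*} [TopologicalSpace X]
    (h : ∀ 𝒟 : Set (Set X), (∀ x : X, {D ∈ 𝒟 | x ∈ D}.Countable) →
      ∀ x : X, {D ∈ 𝒟 | x ∈ closure D}.Countable) :
    ∀ Y : Set X, Y.Nonempty → ¬ WeaklyResolvable Y (aleph 1) := by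
  rintro Y hY ⟨f, hf⟩
  haveI : Nonempty Y := hY.to_subtype
  classical
  set S := fun α => Subtype.val '' {y : Y | α ≤ f y} with hS
  have hpc : ∀ x : X, {D ∈ Set.range S | x ∈ D}.Countable := by
    intro x
    by_cases hx : x ∈ Y
    · have hsub : {D ∈ Set.range S | x ∈ D} ⊆ S '' {α | α ≤ f ⟨x, hx⟩} := by
        rintro D ⟨⟨α, rfl⟩, hxD⟩
        obtain ⟨y, hy, hyx⟩ := hxD
        have hyy : y = ⟨x, hx⟩ := Subtype.ext hyx
        exact ⟨α, by rw [← hyy]; exact hy, rfl⟩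
      exact ((aux_countable_Iic _).image S).mono hsub
    · have hempty : {D ∈ Set.range S | x ∈ D} = ∅ := by
        ext D
        simp only [mem_setOf_eq, mem_empty_iff_false, iff_false, not_and]
        rintro ⟨α, rfl⟩ hxD
        obtain ⟨y, _, hyx⟩ := hxD
        exact hx (hyx ▸ y.2)
      rw [hempty]; exact countable_empty
  have hclosure : ∀ α, ∀ y : Y, (y : X) ∈ closure (S α) := by
    intro α y
    have h1 : y ∈ closure {y' : Y | α ≤ f y'} := hf α y
    rwa [closure_subtype] at h1
  obtain ⟨x₀, hx₀⟩ := hY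
  have hDcnt : (Set.range S).Countable := by
    have hc := h (Set.range S) hpc x₀
    have hsub : Set.range S ⊆ {D ∈ Set.range S | x₀ ∈ closure D} := by
      rintro D ⟨α, rfl⟩
      exact ⟨⟨α, rfl⟩, hclosure α ⟨x₀, hx₀⟩⟩
    exact hc.mono hsub
  set g : Set X → _ := fun D =>
    if hD : ∃ y : Y, (y : X) ∈ D then f hD.choose else f ⟨x₀, hx₀⟩ with hg
  obtain ⟨β, hβ⟩ := aux_exists_gt (hDcnt.image g)
  obtain ⟨y₁, hy₁⟩ := (hf β).nonempty
  have hex : ∃ y : Y, (y : X) ∈ S β := ⟨y₁, ⟨y₁, hy₁, rfl⟩⟩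
  have hgS : β ≤ g (S β) := by
    rw [hg]
    simp only [dif_pos hex]
    obtain ⟨y', hy', h'⟩ := hex.choose_spec
    have : y' = hex.choose := Subtype.ext h'
    rw [← this]
    exact hy'
  have hlt : g (S β) < β := hβ _ ⟨S β, ⟨β, rfl⟩, rfl⟩
  exact absurd hgS (not_le.mpr hlt)
end

section
/- Let X be a crowded topological space that is OHI (every nonempty open subspace is irresolvable). If A ⊆ X has empty interior, then the interior of X \ A is dense in X. -/
open Set

/-!
If `interior Aᶜ` were not dense, the open set `U = interior (closure A)` would be nonempty.
Both `A` and `Aᶜ` are dense in `U` (the latter because `A` has empty interior), so their traces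
partition `U` into two dense subsets, contradicting irresolvability of `U`.
-/

theorem dense_preimage_val_of_subset_closure {X : Type*} [TopologicalSpace X] {U s : Set X}
    (hU : IsOpen U) (hUs : U ⊆ closure s) : Dense ((↑) ⁻¹' s : Set U) := fun x ↦
  hU.isOpenMap_subtype_val.preimage_closure_subset_closure_preimage (hUs x.2)

theorem interior_compl_dense_of_ohi_general {X : Type*} [TopologicalSpace X]
    (hOHI : ∀ U : Set X, IsOpen U → U.Nonempty →
      ¬ ∃ D : Set U, Dense D ∧ Dense Dᶜ)
    (A : Set X) (hA : interior A = ∅) :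
    Dense (interior Aᶜ) := by
  rw [interior_compl, ← interior_eq_empty_iff_dense_compl]
  by_contra hne
  have hAc : interior (closure A) ⊆ closure Aᶜ := by
    rw [closure_compl, hA, compl_empty]
    exact subset_univ _
  exact hOHI _ isOpen_interior (nonempty_iff_ne_empty.2 hne)
    ⟨Subtype.val ⁻¹' A, dense_preimage_val_of_subset_closure isOpen_interior interior_subset,
      dense_preimage_val_of_subset_closure isOpen_interior hAc⟩

/-- if `X` is a crowded OHI space (every nonempty open subspace is
irresolvable) and `A ⊆ X` has empty interior, then the interior of `X \ A` is dense. -/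
theorem interior_compl_dense_of_ohi {X : Type*} [TopologicalSpace X]
    (hcrowded : ∀ x : X, ¬ IsOpen ({x} : Set X))
    (hOHI : ∀ U : Set X, IsOpen U → U.Nonempty →
      ¬ ∃ D : Set U, Dense D ∧ Dense Dᶜ)
    (A : Set X) (hA : interior A = ∅) :
    Dense (interior Aᶜ) :=
  interior_compl_dense_of_ohi_general hOHI A hA
end

section
/- Let κ be an infinite cardinal with κ = cf([κ]^ω, ⊆), and let A be a cofinal subset of [κ]^ω with |A| = κ. Let X be a topological space and h : X → [κ]^ω a function such that ⋃ h''U = κ for every nonempty open U ⊆ X. Then there is a function h* : X → A with h(x) ⊆ h*(x) for all x, such that for every nonempty open U, the family {h*(x) : x ∈ U} is cofinal in ([κ]^ω, ⊆). -/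
set_option autoImplicit false

open Cardinal Set

/-- let `κ` be infinite with `κ = cf([κ]^ω, ⊆)` (expressed by: every
cofinal subfamily of `[κ]^ω` has cardinality at least `κ`), and let `𝒜 ⊆ [κ]^ω` be
cofinal with `|𝒜| = κ`. If `h : X → [κ]^ω` satisfies `⋃ h''U = κ` for every nonempty
open `U`, then there is `h* : X → 𝒜` with `h x ⊆ h* x` for all `x`, such that
`{h* x : x ∈ U}` is cofinal in `([κ]^ω, ⊆)` for every nonempty open `U`. -/
theorem exists_cofinal_enlargement {X : Type*} [TopologicalSpace X]
    (κ : Cardinal) (hκ : ℵ₀ ≤ κ)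
    (hcf : ∀ ℬ : Set (Set κ.ord.ToType),
      (∀ B ∈ ℬ, B.Countable ∧ B.Infinite) →
      (∀ C : Set κ.ord.ToType, C.Countable → C.Infinite → ∃ B ∈ ℬ, C ⊆ B) →
      κ ≤ #ℬ)
    (𝒜 : Set (Set κ.ord.ToType))
    (h𝒜 : ∀ A ∈ 𝒜, A.Countable ∧ A.Infinite)
    (h𝒜cof : ∀ C : Set κ.ord.ToType, C.Countable → C.Infinite → ∃ A ∈ 𝒜, C ⊆ A)
    (h𝒜card : #𝒜 = κ)
    (h : X → Set κ.ord.ToType)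
    (hh : ∀ x, (h x).Countable ∧ (h x).Infinite)
    (hU : ∀ U : Set X, IsOpen U → U.Nonempty → (⋃ x ∈ U, h x) = Set.univ) :
    ∃ hstar : X → Set κ.ord.ToType,
      (∀ x, hstar x ∈ 𝒜) ∧
      (∀ x, h x ⊆ hstar x) ∧
      ∀ U : Set X, IsOpen U → U.Nonempty →
        ∀ C : Set κ.ord.ToType, C.Countable → C.Infinite →
          ∃ x ∈ U, C ⊆ hstar x := by
  obtain ⟨e⟩ : Nonempty (κ.ord.ToType ≃ 𝒜) := by
    rw [← Cardinal.eq, Cardinal.mk_ord_toType, h𝒜card]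
  have key : ∀ x, ∃ A ∈ 𝒜, (h x ∪ ⋃ α ∈ h x, (e α : Set κ.ord.ToType)) ⊆ A := by
    intro x
    apply h𝒜cof
    · exact ((hh x).1).union (((hh x).1).biUnion fun α _ => (h𝒜 _ (e α).2).1)
    · exact ((hh x).2).mono subset_union_left
  choose hstar hmem hsub using key
  refine ⟨hstar, hmem, fun x => subset_union_left.trans (hsub x), ?_⟩
  intro U hUo hUne C hCc hCi
  obtain ⟨A, hA, hCA⟩ := h𝒜cof C hCc hCi
  set α := e.symm ⟨A, hA⟩ with hα
  have hmemU : α ∈ ⋃ x ∈ U, h x := by rw [hU U hUo hUne]; trivial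
  obtain ⟨x, hxU, hαx⟩ : ∃ x ∈ U, α ∈ h x := by simpa using hmemU
  refine ⟨x, hxU, ?_⟩
  have h1 : (e α : Set κ.ord.ToType) ⊆ hstar x :=
    (subset_biUnion_of_mem hαx).trans (subset_union_right.trans (hsub x))
  have h2 : (e α : Set κ.ord.ToType) = A := by rw [hα, Equiv.apply_symm_apply]
  exact hCA.trans (h2 ▸ h1)
end

section
/- Let X be a topological space and f : X → ω a function such that {x ∈ X : f(x) ≥ n} is dense in X for every n < ω (X is ω-weakly-resolvable). Then in the forcing extension by Fn(ω, ω) (finite partial functions from ω to ω), with generic function g = ⋃G : ω → ω, the composition g ∘ f witnesses that X is ω-resolvable: each set {x ∈ X : g(f(x)) = n} is dense in X. -/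
set_option autoImplicit false

open Set

/-!
Conditions of `Fn(ω, ω)` are modelled as finitely supported `p : ℕ → Option ℕ`, and the
conclusion says that the conditions forcing `∃ x ∈ U, g (f x) = n` are dense; by genericity,
each fiber of `g ∘ f` then meets every nonempty open set.

A condition `p` is undefined above some bound `m`. Since `{x | m < f x}` is dense, some
`x ∈ U` has `f x` outside the domain of `p`, and extending `p` by `f x ↦ n` gives a stronger
condition forcing `g (f x) = n`.
-/

section PartialFunction

variable {α β : Type*} [DecidableEq α]

lemma Set.Finite.update_ne_none {p : α → Option β} (hp : {k | p k ≠ none}.Finite)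
    (k : α) (b : Option β) : {j | Function.update p k b j ≠ none}.Finite :=
  (hp.insert k).subset fun j hj => by
    by_cases h : j = k
    · exact Or.inl h
    · exact Or.inr (by simpa [Function.update_of_ne h] using hj)

lemma Function.update_eq_some_of_eq_none {p : α → Option β} {k j : α} {v : β}
    (hk : p k = none) (b : Option β) (hj : p j = some v) : Function.update p k b j = some v := by
  have hjk : j ≠ k := by
    rintro rfl
    simp_all
  rwa [Function.update_of_ne hjk]

end PartialFunction

/-- if `f : X → ω` witnesses that `X` is `ω`-weakly-resolvable, then the
generic function `g = ⋃ G` added by `Fn(ω, ω)` makes each fiber of `g ∘ f` dense. We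
express this forcing-theoretically: conditions are finite partial functions
`p : ℕ → Option ℕ`, and for every `n` and every nonempty open `U`, the set of conditions
forcing `∃ x ∈ U, g (f x) = n` (namely those `q` with `q (f x) = some n` for some
`x ∈ U`) is dense in the poset `Fn(ω, ω)`; hence in the extension each set
`{x : g (f x) = n}` is dense in `X`. -/
theorem generic_composition_resolves {X : Type*} [TopologicalSpace X]
    (f : X → ℕ) (hf : ∀ n : ℕ, Dense {x : X | n ≤ f x}) :
    ∀ (n : ℕ) (U : Set X), IsOpen U → U.Nonempty →
      ∀ p : ℕ → Option ℕ, {k | p k ≠ none}.Finite →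
        ∃ q : ℕ → Option ℕ, {k | q k ≠ none}.Finite ∧
          (∀ k v, p k = some v → q k = some v) ∧
          ∃ x ∈ U, q (f x) = some n := by
  intro n U hU hUne p hp
  obtain ⟨m, hm⟩ := hp.bddAbove
  obtain ⟨x, hxm, hxU⟩ := (hf (m + 1)).exists_mem_open hU hUne
  have hpx : p (f x) = none := by
    by_contra hne
    have hle : f x ≤ m := hm hne
    have hgt : m + 1 ≤ f x := hxm
    omega
  exact ⟨Function.update p (f x) (some n), hp.update_ne_none _ _,
    fun _ _ => Function.update_eq_some_of_eq_none hpx _, x, hxU, by simp⟩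
end

section
/- Let X be a κ-c.c. topological space, let ⟨V_ζ : ζ < κ⟩ be a decreasing sequence of open subsets of X, and suppose Z ⊆ X satisfies ⋂_{ζ<κ} V_ζ ∩ Z = ∅, with cl(V_ζ) = cl(V_0) for all ζ < κ, and V_0 ∩ Z dense in V_0. Then V_0 is κ-weakly-resolvable: the sets T_0 = V_0 \ Z and T_ζ = ((⋂_{ξ<ζ} V_ξ) \ V_ζ) ∩ Z for 0 < ζ < κ partition V_0, and for each ξ < κ, ⋃_{ξ<ζ} T_ζ ⊇ V_ξ ∩ Z is dense in V_0. -/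
set_option autoImplicit false

open Cardinal Set Function

/-!
Since `⋂ V ∩ Z = ∅`, every `x ∈ V 0 ∩ Z` has a first index `ζ` with `x ∉ V ζ`, and `T ζ` is
exactly the set of points of `Z` whose first exit is `ζ`; so the `T ζ` partition `V 0`, and a
point of `V ξ ∩ Z` exits strictly after `ξ`. Hence the tail beyond `ξ` contains `V ξ ∩ Z`,
which is dense in `V 0` because `V ξ` is open with the same closure as `V 0`, in which `Z` is
dense.
-/

section ExitPieces

variable {α : Type*}

/-- The set `T_ζ` of the statement. -/
def exitPiece (V : Ordinal → Set α) (Z : Set α) (ζ : Ordinal) : Set α :=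
  if ζ = 0 then V 0 \ Z else ((⋂ η ∈ Iio ζ, V η) \ V ζ) ∩ Z

variable {V : Ordinal → Set α} {Z : Set α}

@[simp]
lemma exitPiece_zero : exitPiece V Z 0 = V 0 \ Z := if_pos rfl

lemma exitPiece_of_ne_zero {ζ : Ordinal} (hζ : ζ ≠ 0) :
    exitPiece V Z ζ = ((⋂ η ∈ Iio ζ, V η) \ V ζ) ∩ Z := if_neg hζ

lemma exitPiece_subset (ζ : Ordinal) : exitPiece V Z ζ ⊆ V 0 := by
  rcases eq_or_ne ζ 0 with rfl | hζ
  · rw [exitPiece_zero]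
    exact sdiff_subset
  · rw [exitPiece_of_ne_zero hζ]
    exact fun x hx => mem_iInter₂.mp hx.1.1 0 (pos_iff_ne_zero.mpr hζ)

lemma disjoint_exitPiece_of_lt {a b : Ordinal} (hab : a < b) :
    Disjoint (exitPiece V Z a) (exitPiece V Z b) := by
  rw [Set.disjoint_left, exitPiece_of_ne_zero hab.ne_bot]
  intro x hxa hxb
  rcases eq_or_ne a 0 with rfl | ha
  · exact (exitPiece_zero ▸ hxa).2 hxb.2
  · exact (exitPiece_of_ne_zero ha ▸ hxa).1.2 (mem_iInter₂.mp hxb.1.1 a hab)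

lemma pairwise_disjoint_exitPiece : Pairwise (Disjoint on exitPiece V Z) := by
  intro a b hab
  rcases hab.lt_or_gt with h | h
  · exact disjoint_exitPiece_of_lt h
  · exact (disjoint_exitPiece_of_lt h).symm

lemma exists_mem_exitPiece {o ξ : Ordinal} {x : α}
    (hdec : ∀ ξ ζ : Ordinal, ξ ≤ ζ → ζ < o → V ζ ⊆ V ξ) (hξ : ξ < o)
    (hxV : x ∈ V ξ) (hxZ : x ∈ Z) (hexit : ∃ ζ < o, x ∉ V ζ) :
    ∃ ζ ∈ Ioo ξ o, x ∈ exitPiece V Z ζ := by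
  obtain ⟨ζ, ⟨hζo, hxζ⟩, hmin⟩ := wellFounded_lt.has_min {ζ | ζ < o ∧ x ∉ V ζ} hexit
  have hξζ : ξ < ζ := lt_of_not_ge fun hζξ => hxζ (hdec ζ ξ hζξ hξ hxV)
  refine ⟨ζ, ⟨hξζ, hζo⟩, ?_⟩
  rw [exitPiece_of_ne_zero hξζ.ne_bot]
  refine ⟨⟨mem_iInter₂.mpr fun η hη => ?_, hxζ⟩, hxZ⟩
  by_contra hxη
  exact hmin η ⟨hη.trans hζo, hxη⟩ hη

variable {o : Ordinal}

lemma exists_notMem_of_biInter_inter_eq_empty (hempty : (⋂ ζ ∈ Iio o, V ζ) ∩ Z = ∅)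
    {x : α} (hxZ : x ∈ Z) : ∃ ζ < o, x ∉ V ζ := by
  by_contra! h
  exact hempty.subset ⟨mem_iInter₂.mpr h, hxZ⟩

lemma inter_subset_biUnion_Ioo_exitPiece
    (hdec : ∀ ξ ζ : Ordinal, ξ ≤ ζ → ζ < o → V ζ ⊆ V ξ)
    (hempty : (⋂ ζ ∈ Iio o, V ζ) ∩ Z = ∅) {ξ : Ordinal} (hξ : ξ < o) :
    V ξ ∩ Z ⊆ ⋃ ζ ∈ Ioo ξ o, exitPiece V Z ζ := fun _ ⟨hxV, hxZ⟩ =>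
  let ⟨_, hζ, hxζ⟩ := exists_mem_exitPiece hdec hξ hxV hxZ
    (exists_notMem_of_biInter_inter_eq_empty hempty hxZ)
  mem_biUnion hζ hxζ

lemma biUnion_Iio_exitPiece (ho : 0 < o)
    (hdec : ∀ ξ ζ : Ordinal, ξ ≤ ζ → ζ < o → V ζ ⊆ V ξ)
    (hempty : (⋂ ζ ∈ Iio o, V ζ) ∩ Z = ∅) :
    ⋃ ζ ∈ Iio o, exitPiece V Z ζ = V 0 := by
  refine (iUnion₂_subset fun ζ _ => exitPiece_subset ζ).antisymm fun x hx => ?_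
  by_cases hxZ : x ∈ Z
  · exact biUnion_mono Ioo_subset_Iio_self (fun _ _ => subset_rfl)
      (inter_subset_biUnion_Ioo_exitPiece hdec hempty ho ⟨hx, hxZ⟩)
  · exact mem_biUnion (x := 0) ho (exitPiece_zero ▸ ⟨hx, hxZ⟩)

end ExitPieces

lemma subset_closure_inter_of_isOpen {X : Type*} [TopologicalSpace X] {U W Z : Set X}
    (hU : IsOpen U) (hWU : W ⊆ closure U) (hUZ : U ⊆ closure Z) : W ⊆ closure (U ∩ Z) :=
  calc W ⊆ closure U := hWU
    _ ⊆ closure (closure (U ∩ Z)) := closure_mono fun _ hx => hU.inter_closure ⟨hx, hUZ hx⟩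
    _ = closure (U ∩ Z) := closure_closure

theorem kappa_weakly_resolvable_open_piece_general {X : Type*} [TopologicalSpace X]
    (κ : Cardinal) (hκ : ℵ₀ ≤ κ)
    (V : Ordinal → Set X) (Z : Set X)
    (hopen : ∀ ζ < κ.ord, IsOpen (V ζ))
    (hdec : ∀ ξ ζ : Ordinal, ξ ≤ ζ → ζ < κ.ord → V ζ ⊆ V ξ)
    (hempty : (⋂ ζ ∈ Set.Iio κ.ord, V ζ) ∩ Z = ∅)
    (hcl : ∀ ζ < κ.ord, closure (V ζ) = closure (V 0))
    (hZdense : V 0 ⊆ closure (V 0 ∩ Z)) :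
    ∃ T : Ordinal → Set X,
      T 0 = V 0 \ Z ∧
      (∀ ζ : Ordinal, 0 < ζ → T ζ = ((⋂ ξ ∈ Set.Iio ζ, V ξ) \ V ζ) ∩ Z) ∧
      (Set.Iio κ.ord).PairwiseDisjoint T ∧
      (⋃ ζ ∈ Set.Iio κ.ord, T ζ) = V 0 ∧
      ∀ ξ < κ.ord,
        V ξ ∩ Z ⊆ (⋃ ζ ∈ Set.Ioo ξ κ.ord, T ζ) ∧
        V 0 ⊆ closure (⋃ ζ ∈ Set.Ioo ξ κ.ord, T ζ) := by
  have hκpos : 0 < κ.ord := ord_pos.mpr (aleph0_pos.trans_le hκ)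
  have hV0Z : closure (V 0) ⊆ closure Z :=
    closure_minimal (hZdense.trans (closure_mono inter_subset_right)) isClosed_closure
  refine ⟨exitPiece V Z, exitPiece_zero, fun ζ hζ => exitPiece_of_ne_zero hζ.ne',
    Pairwise.set_pairwise pairwise_disjoint_exitPiece _, biUnion_Iio_exitPiece hκpos hdec hempty,
    fun ξ hξ => ⟨inter_subset_biUnion_Ioo_exitPiece hdec hempty hξ, ?_⟩⟩
  have hdense : V 0 ⊆ closure (V ξ ∩ Z) :=
    subset_closure_inter_of_isOpen (hopen ξ hξ) ((hcl ξ hξ).symm ▸ subset_closure)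
      (subset_closure.trans ((hcl ξ hξ).symm ▸ hV0Z))
  exact hdense.trans (closure_mono (inter_subset_biUnion_Ioo_exitPiece hdec hempty hξ))

/-- let `X` be `κ`-c.c., `⟨V_ζ : ζ < κ⟩` a decreasing sequence of open
sets with `⋂_{ζ<κ} V_ζ ∩ Z = ∅`, `cl(V_ζ) = cl(V_0)` for all `ζ < κ`, and `V_0 ∩ Z`
dense in `V_0`. Then the sets `T_0 = V_0 \ Z` and
`T_ζ = ((⋂_{ξ<ζ} V_ξ) \ V_ζ) ∩ Z` (for `0 < ζ < κ`) partition `V_0`, and for each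
`ξ < κ` the tail `⋃_{ξ<ζ<κ} T_ζ` contains `V_ξ ∩ Z` and is dense in `V_0`; so `V_0` is
`κ`-weakly-resolvable. -/
theorem kappa_weakly_resolvable_open_piece {X : Type*} [TopologicalSpace X]
    (κ : Cardinal) (hκ : ℵ₀ ≤ κ)
    (hcc : ∀ 𝒞 : Set (Set X), (∀ U ∈ 𝒞, IsOpen U ∧ U.Nonempty) →
      𝒞.PairwiseDisjoint id → #𝒞 < κ)
    (V : Ordinal → Set X) (Z : Set X)
    (hopen : ∀ ζ < κ.ord, IsOpen (V ζ))
    (hdec : ∀ ξ ζ : Ordinal, ξ ≤ ζ → ζ < κ.ord → V ζ ⊆ V ξ)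
    (hempty : (⋂ ζ ∈ Set.Iio κ.ord, V ζ) ∩ Z = ∅)
    (hcl : ∀ ζ < κ.ord, closure (V ζ) = closure (V 0))
    (hZdense : V 0 ⊆ closure (V 0 ∩ Z)) :
    ∃ T : Ordinal → Set X,
      T 0 = V 0 \ Z ∧
      (∀ ζ : Ordinal, 0 < ζ → T ζ = ((⋂ ξ ∈ Set.Iio ζ, V ξ) \ V ζ) ∩ Z) ∧
      (Set.Iio κ.ord).PairwiseDisjoint T ∧
      (⋃ ζ ∈ Set.Iio κ.ord, T ζ) = V 0 ∧
      ∀ ξ < κ.ord,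
        V ξ ∩ Z ⊆ (⋃ ζ ∈ Set.Ioo ξ κ.ord, T ζ) ∧
        V 0 ⊆ closure (⋃ ζ ∈ Set.Ioo ξ κ.ord, T ζ) :=
  kappa_weakly_resolvable_open_piece_general κ hκ V Z hopen hdec hempty hcl hZdense
end

section
/- Let X be a κ-c.c. topological space and ⟨V_ζ : ζ < κ⟩ a decreasing sequence of open subsets of X. Then there exists ξ < κ such that cl(V_ζ) = cl(V_ξ) for all ζ with ξ ≤ ζ < κ. -/
set_option autoImplicit false
open Cardinal Set Function

/-! If the closures never stabilized, the indices `ξ` at which `cl(V_ξ)` takes a new value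
would be cofinal below `κ`, hence `κ` many by regularity. For such `ξ`, let `η` be the first
index after `ξ` with `cl(V_η) ≠ cl(V_ξ)`; then `V_ξ \ cl(V_η)` is open and nonempty, and it
misses every later new-value point's `V_ξ'`, because `ξ' ≥ η` and so `V_ξ' ⊆ V_η`. This gives
`κ` many pairwise disjoint nonempty open sets. -/

section WellOrder

variable {α β : Type*} [LinearOrder α] [WellFoundedLT α]

lemma exists_first_change (F : α → β) {a b : α} (hab : a ≤ b) (hne : F b ≠ F a) :
    ∃ c, a ≤ c ∧ F c ≠ F a ∧ ∀ d, a ≤ d → F d ≠ F a → c ≤ d := by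
  obtain ⟨c, ⟨hac, hc⟩, hmin⟩ := wellFounded_lt.has_min {c | a ≤ c ∧ F c ≠ F a} ⟨b, hab, hne⟩
  exact ⟨c, hac, hc, fun d had hd => not_lt.mp (hmin d ⟨had, hd⟩)⟩

lemma Antitone.isCofinal_setOf_forall_lt_ne [PartialOrder β] {F : α → β} (hF : Antitone F)
    (hchange : ∀ a, ∃ b, a ≤ b ∧ F b ≠ F a) : IsCofinal {c | ∀ d < c, F d ≠ F c} := by
  intro a
  obtain ⟨b, hab, hne⟩ := hchange a
  obtain ⟨c, hac, hc, hmin⟩ := exists_first_change F hab hne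
  refine ⟨c, fun d hdc hdc' => ?_, hac⟩
  rcases le_or_gt a d with had | hda
  · exact (hmin d had (by rwa [hdc'])).not_gt hdc
  · exact hc (le_antisymm (hF hac) (hdc' ▸ hF hda.le))

end WellOrder

def ChainCondition (κ : Cardinal) (X : Type*) [TopologicalSpace X] : Prop :=
  ∀ 𝒞 : Set (Set X), (∀ U ∈ 𝒞, IsOpen U ∧ U.Nonempty) → 𝒞.PairwiseDisjoint id → #𝒞 < κ

universe u v

variable {X : Type u} [TopologicalSpace X]

lemma ChainCondition.lift_mk_lt {κ : Cardinal} (hcc : ChainCondition κ X) {ι : Type v}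
    {U : ι → Set X} (hU : ∀ i, IsOpen (U i) ∧ (U i).Nonempty) (hdisj : Pairwise (Disjoint on U)) :
    lift.{u} #ι < lift.{v} κ := by
  have hinj : Injective U := fun i j hij => by_contra fun hne =>
    (hU i).2.ne_empty (disjoint_self.mp (by simpa only [onFun, hij] using hdisj hne))
  rw [← mk_range_eq_of_injective hinj, lift_lt]
  refine hcc _ (forall_mem_range.mpr hU) ?_
  rintro _ ⟨i, rfl⟩ _ ⟨j, rfl⟩ hij
  exact hdisj (ne_of_apply_ne U hij)

lemma exists_pairwise_disjoint_of_closure_ne {α : Type*} [LinearOrder α] [WellFoundedLT α]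
    {V : α → Set X} (hV : Antitone V) (hopen : ∀ a, IsOpen (V a))
    (hchange : ∀ a, ∃ b, a ≤ b ∧ closure (V b) ≠ closure (V a)) {s : Set α}
    (hs : ∀ a ∈ s, ∀ b ∈ s, a < b → closure (V b) ≠ closure (V a)) :
    ∃ U : s → Set X, (∀ i, IsOpen (U i) ∧ (U i).Nonempty) ∧ Pairwise (Disjoint on U) := by
  choose c hac hc hmin using fun a =>
    let ⟨_, hab, hne⟩ := hchange a; exists_first_change (closure ∘ V) hab hne
  refine ⟨fun a => V a \ closure (V (c a)), fun a => ⟨(hopen a).sdiff isClosed_closure, ?_⟩, ?_⟩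
  · exact nonempty_iff_ne_empty.mpr fun hempty => hc a (subset_antisymm
      (closure_mono (hV (hac a))) (closure_minimal (sdiff_eq_empty.mp hempty) isClosed_closure))
  · exact (pairwise_disjoint_on _).mpr fun a b hab => disjoint_sdiff_left.mono_right <|
      sdiff_subset.trans <| (hV (hmin a b hab.le (hs a a.2 b b.2 hab))).trans subset_closure

theorem Cardinal.IsRegular.cof_Iio_ord {κ : Cardinal.{u}} (hκ : κ.IsRegular) :
    Order.cof (Iio κ.ord) = Cardinal.lift.{u + 1} κ := by
  rw [Ordinal.cof_Iio, ← Ordinal.lift_cof, hκ.cof_ord]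

theorem ChainCondition.exists_closure_eq {κ : Cardinal.{u}} (hcc : ChainCondition κ X)
    {α : Type v} [LinearOrder α] [WellFoundedLT α] (hκ : lift.{v} κ ≤ lift.{u} (Order.cof α))
    {V : α → Set X} (hV : Antitone V) (hopen : ∀ a, IsOpen (V a)) :
    ∃ a, ∀ b, a ≤ b → closure (V b) = closure (V a) := by
  by_contra! hchange
  set s := {c | ∀ d < c, closure (V d) ≠ closure (V c)}
  have hcof : IsCofinal s :=
    ((monotone_closure X).comp_antitone hV).isCofinal_setOf_forall_lt_ne hchange
  obtain ⟨U, hU, hdisj⟩ := exists_pairwise_disjoint_of_closure_ne hV hopen hchange (s := s)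
    fun a _ b hb hab => (hb a hab).symm
  have hs : lift.{u} #s < lift.{v} κ := hcc.lift_mk_lt hU hdisj
  exact hs.not_ge (hκ.trans (lift_le.mpr (Order.cof_le hcof)))

/-- if `X` is `κ`-c.c. (`κ` a regular infinite cardinal) and
`⟨V_ζ : ζ < κ⟩` is a decreasing sequence of open subsets of `X`, then there is `ξ < κ`
such that `cl(V_ζ) = cl(V_ξ)` for all `ξ ≤ ζ < κ`. -/
theorem closures_stabilize {X : Type*} [TopologicalSpace X]
    (κ : Cardinal) (hκ : κ.IsRegular)
    (hcc : ∀ 𝒞 : Set (Set X), (∀ U ∈ 𝒞, IsOpen U ∧ U.Nonempty) →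
      𝒞.PairwiseDisjoint id → #𝒞 < κ)
    (V : Ordinal → Set X)
    (hopen : ∀ ζ < κ.ord, IsOpen (V ζ))
    (hdec : ∀ ξ ζ : Ordinal, ξ ≤ ζ → ζ < κ.ord → V ζ ⊆ V ξ) :
    ∃ ξ < κ.ord, ∀ ζ : Ordinal, ξ ≤ ζ → ζ < κ.ord → closure (V ζ) = closure (V ξ) := by
  obtain ⟨⟨ξ, hξ⟩, hstab⟩ := ChainCondition.exists_closure_eq hcc (α := Iio κ.ord)
    (by simp [hκ.cof_Iio_ord]) (V := fun ζ => V ζ) (fun a b hab => hdec a b hab b.2)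
    (fun a => hopen a a.2)
  exact ⟨ξ, hξ, fun ζ hξζ hζ => hstab ⟨ζ, hζ⟩ hξζ⟩
end
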